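/- For every n ≥ 1, the number of block-parallel update modes of [n] up to dynamical isomorphism on the limit set equals the sum over integer partitions i of n of [ n! / ∏_{j=1}^{d(i)} (m(i,j)!)^j ] · (1/lcm(i)), where lcm(i) is the least common multiple of the distinct part sizes of partition i. -/

import Mathlib

/-!
Record a partitioned order `μ` by its labeling `x ↦ (j, r)`: `x` sits at position `r` of an
o-block of length `j`. Then `x ∈ W_ℓ` iff `ℓ ≡ r [MOD j]`, so `φ(μ)` is determined by the
labeling, and a circular shift of `φ(μ)` by `k` is the same as adding `k` to every position
modulo its block length. Conversely, every labeling in which each label `(j, r)` with `r < j`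
is used `m(i, j)` times comes from a partitioned order with o-block lengths `i`. Such labelings
form a single orbit of `Perm (Fin n)`, with stabilizer of order `∏_j (m(i,j)!)^j`, and under
the shift every labeling has exactly `lcm(i)` distinct images.
-/


/-- A partitioned order of `[n]`: a set of pairwise disjoint nonempty lists
of distinct elements of `[n]` whose union is `[n]`. -/
structure PartitionedOrder (n : ℕ) where
  oblocks : Finset (List (Fin n))
  nonempty : ∀ S ∈ oblocks, S ≠ []
  nodup : ∀ S ∈ oblocks, S.Nodup
  disjoint : ∀ S ∈ oblocks, ∀ T ∈ oblocks, S ≠ T → ∀ x, x ∈ S → x ∉ T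
  cover : ∀ x : Fin n, ∃ S ∈ oblocks, x ∈ S

namespace PartitionedOrder

variable {n : ℕ}

/-- The block `W_ℓ = { S_k[ℓ mod n_k] : k }` of the sequential rewriting. -/
def phiBlock (μ : PartitionedOrder n) (ℓ : ℕ) : Finset (Fin n) :=
  μ.oblocks.attach.image (fun S =>
    S.1.get ⟨ℓ % S.1.length,
      Nat.mod_lt _ (List.length_pos_iff_ne_nil.mpr (μ.nonempty S.1 S.2))⟩)

/-- The period `p` of a partitioned order: the lcm of its o-block lengths. -/
def period (μ : PartitionedOrder n) : ℕ := μ.oblocks.lcm List.length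

/-- The sequential rewriting `φ(μ) = (W_0, …, W_{p-1})`. -/
def phi (μ : PartitionedOrder n) : List (Finset (Fin n)) :=
  (List.range μ.period).map μ.phiBlock

end PartitionedOrder

/-- An ordered partition of `[n]` (block-sequential update mode): a sequence of
nonempty pairwise disjoint subsets of `[n]` whose union is `[n]`. -/
def IsOrderedPartition {n : ℕ} (L : List (Finset (Fin n))) : Prop :=
  (∀ W ∈ L, W.Nonempty) ∧ L.Pairwise Disjoint ∧ ∀ x : Fin n, ∃ W ∈ L, x ∈ W

/-- `m(i,j)`: the multiplicity of the part of size `j` in the partition `i`. -/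
def Nat.Partition.mult {n : ℕ} (i : n.Partition) (j : ℕ) : ℕ :=
  Multiset.count j i.parts

/-- `d(i)`: the largest part of the partition `i` (0 for the empty partition). -/
def Nat.Partition.dmax {n : ℕ} (i : n.Partition) : ℕ :=
  i.parts.toFinset.sup id

/-- `lcm(i)`: the least common multiple of the distinct part sizes of `i`. -/
def Nat.Partition.lcmParts {n : ℕ} (i : n.Partition) : ℕ :=
  i.parts.toFinset.lcm id

open Finset

theorem Nat.modEq_finset_lcm_iff {ι : Type*} {s : Finset ι} {f : ι → ℕ} {a b : ℕ} :
    a ≡ b [MOD s.lcm f] ↔ ∀ i ∈ s, a ≡ b [MOD f i] := by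
  wlog hab : a ≤ b generalizing a b
  · rw [Nat.ModEq.comm, this (le_of_not_ge hab)]
    exact forall₂_congr fun _ _ => Nat.ModEq.comm
  simp only [Nat.modEq_iff_dvd' hab, Finset.lcm_dvd_iff]

theorem Nat.add_sub_one_mul_of_pos {j : ℕ} (hj : 0 < j) (k : ℕ) : k + (j - 1) * k = j * k := by
  rw [Nat.sub_one_mul, Nat.add_sub_cancel' (Nat.le_mul_of_pos_left k hj)]

theorem Finset.range_filter_lt {d j : ℕ} (hj : j ≤ d) : {r ∈ range d | r < j} = range j := by
  ext r
  simp only [mem_filter, mem_range]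
  omega

theorem exists_card_fiber_eq {α ι : Type*} [Fintype α] [DecidableEq ι] (s : Finset ι)
    (N : ι → ℕ) (hN : ∀ p ∉ s, N p = 0) (hsum : ∑ p ∈ s, N p = Fintype.card α) :
    ∃ c : α → ι, ∀ p, #{x | c x = p} = N p := by
  have hcard : Fintype.card α = Fintype.card (Σ p : s, Fin (N p)) := by
    simp [Fintype.card_sigma, Finset.sum_attach s N, hsum]
  let e := Fintype.equivOfCardEq hcard
  refine ⟨fun x => (e x).1, fun p => ?_⟩
  by_cases hp : p ∈ s
  · rw [← Fintype.card_subtype]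
    calc Fintype.card {x // ((e x).1 : ι) = p}
        = Fintype.card {t : Σ q : s, Fin (N q) // t.1 = ⟨p, hp⟩} :=
          Fintype.card_congr (e.subtypeEquiv fun x => by simp [Subtype.ext_iff])
      _ = N p := by rw [Fintype.card_congr (Equiv.sigmaSubtype _), Fintype.card_fin]
  · rw [hN p hp, Finset.card_eq_zero, Finset.filter_eq_empty_iff]
    exact fun x _ h => hp (h ▸ (e x).1.2)

theorem DomMulAct.mem_orbit_perm_iff {α ι : Type*} [Fintype α] [DecidableEq ι] {f g : α → ι} :
    g ∈ MulAction.orbit (Equiv.Perm α)ᵈᵐᵃ f ↔ ∀ p, #{x | g x = p} = #{x | f x = p} := by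
  constructor
  · rintro ⟨σ, rfl⟩ p
    exact Finset.card_equiv (mk.symm σ) (by simp [DomMulAct.smul_apply])
  · intro h
    let e : ∀ p, {x // g x = p} ≃ {x // f x = p} := fun p =>
      Fintype.equivOfCardEq (by simpa only [Fintype.card_subtype] using h p)
    exact ⟨mk (Equiv.ofFiberEquiv e), funext (Equiv.ofFiberEquiv_map e)⟩

theorem Setoid.natCard_quotient_eq_sum_inv {α K : Type*} [Fintype α] [Field K] [CharZero K]
    (s : Setoid α) : (Nat.card (Quotient s) : K) = ∑ a, 1 / (Nat.card {b // s b a} : K) := by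
  classical
  have hclass : ∀ a, Nat.card {b // s b a} = #{b | Quotient.mk s b = Quotient.mk s a} :=
    fun a => by simp [Nat.card_eq_fintype_card, Fintype.card_subtype, Quotient.eq]
  simp only [hclass]
  rw [← Finset.sum_fiberwise univ (Quotient.mk s), Nat.card_eq_fintype_card,
    Fintype.card_eq_sum_ones]
  push_cast
  refine sum_congr rfl fun q _ => ?_
  obtain ⟨a, rfl⟩ := Quotient.exists_rep q
  have hpos : (#{b | Quotient.mk s b = ⟦a⟧} : K) ≠ 0 :=
    Nat.cast_ne_zero.2 (Finset.card_pos.2 ⟨a, by simp⟩).ne'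
  rw [sum_congr rfl fun b hb => by rw [(mem_filter.1 hb).2], sum_const, nsmul_eq_mul,
    mul_one_div_cancel hpos]

def rotLabel (k : ℕ) (p : ℕ × ℕ) : ℕ × ℕ := (p.1, (p.2 + k) % p.1)

theorem rotLabel_rotLabel (k k' : ℕ) (p : ℕ × ℕ) :
    rotLabel k' (rotLabel k p) = rotLabel (k + k') p := by
  simp [rotLabel, add_assoc]

theorem rotLabel_comp_rotLabel (k k' : ℕ) : rotLabel k' ∘ rotLabel k = rotLabel (k + k') :=
  funext (rotLabel_rotLabel k k')

theorem rotLabel_of_dvd {k : ℕ} {p : ℕ × ℕ} (hp : p.2 < p.1) (hk : p.1 ∣ k) :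
    rotLabel k p = p := by
  simp [rotLabel, Nat.add_mod, Nat.mod_eq_zero_of_dvd hk, Nat.mod_eq_of_lt hp]

theorem rotLabel_snd_lt (k : ℕ) {p : ℕ × ℕ} (hp : 0 < p.1) :
    (rotLabel k p).2 < (rotLabel k p).1 :=
  Nat.mod_lt _ hp

theorem rotLabel_eq_iff {k : ℕ} {p q : ℕ × ℕ} (hp : p.2 < p.1) :
    rotLabel k p = q ↔ q.2 < q.1 ∧ p = rotLabel ((q.1 - 1) * k) q := by
  constructor
  · rintro rfl
    refine ⟨rotLabel_snd_lt k (by omega), ?_⟩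
    rw [rotLabel_rotLabel, show (rotLabel k p).1 = p.1 from rfl,
      Nat.add_sub_one_mul_of_pos (by omega), rotLabel_of_dvd hp (dvd_mul_right _ _)]
  · rintro ⟨hq, rfl⟩
    rw [rotLabel_rotLabel, add_comm, Nat.add_sub_one_mul_of_pos (by omega),
      rotLabel_of_dvd hq (dvd_mul_right _ _)]

theorem eq_rotLabel_iff_forall_mod {k : ℕ} {p q : ℕ × ℕ} (hp : p.2 < p.1) :
    q = rotLabel k p ↔ ∀ ℓ, ℓ % p.1 = p.2 ↔ (ℓ + k) % q.1 = q.2 := by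
  obtain ⟨j, r⟩ := p
  obtain ⟨j', r'⟩ := q
  simp only [rotLabel, Prod.mk.injEq] at hp ⊢
  constructor
  · rintro ⟨rfl, rfl⟩ ℓ
    have hmod : ℓ % j' = r ↔ ℓ ≡ r [MOD j'] := by rw [Nat.ModEq, Nat.mod_eq_of_lt hp]
    rw [hmod]
    exact ⟨Nat.ModEq.add_right k, Nat.ModEq.add_right_cancel' k⟩
  · intro h
    -- Testing `ℓ = r + j` and `ℓ = r + j'` shows that `j` and `j'` divide each other.
    have hr : (r + k) % j' = r' := (h r).1 (Nat.mod_eq_of_lt hp)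
    have hj'j : j' ∣ j := by
      have : r + k + j ≡ r + k + 0 [MOD j'] := by
        have := (h (r + j)).1 (by simp [Nat.mod_eq_of_lt hp])
        rwa [add_right_comm, ← hr] at this
      exact (Nat.modEq_zero_iff_dvd).1 (Nat.ModEq.add_left_cancel' _ this)
    have hjj' : j ∣ j' := by
      have : r + j' ≡ r + 0 [MOD j] := by
        have := (h (r + j')).2 (by rw [add_right_comm, Nat.add_mod_right, hr])
        rw [Nat.ModEq, this, add_zero, Nat.mod_eq_of_lt hp]
      exact (Nat.modEq_zero_iff_dvd).1 (Nat.ModEq.add_left_cancel' _ this)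
    obtain rfl := Nat.dvd_antisymm hj'j hjj'
    exact ⟨rfl, hr.symm⟩

namespace Nat.Partition

variable {n : ℕ}

def labelCount (i : n.Partition) (p : ℕ × ℕ) : ℕ := if p.2 < p.1 then i.mult p.1 else 0

/-- `c x = (j, r)` stands for "`x` sits at position `r` of an o-block of length `j`", the
o-block lengths forming the partition `i`. -/
def IsLabeling (i : n.Partition) (c : Fin n → ℕ × ℕ) : Prop :=
  ∀ p, #{x | c x = p} = i.labelCount p

abbrev Labeling (i : n.Partition) : Type := {c : Fin n → ℕ × ℕ // i.IsLabeling c}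

theorem lcmParts_pos (i : n.Partition) : 0 < i.lcmParts := by
  refine Nat.pos_of_ne_zero fun h => ?_
  obtain ⟨j, hj, hj0⟩ := Finset.lcm_eq_zero_iff.1 h
  exact (i.parts_pos (Multiset.mem_toFinset.1 hj)).ne' hj0

theorem le_dmax {i : n.Partition} {j : ℕ} (hj : j ∈ i.parts) : j ≤ i.dmax :=
  Finset.le_sup (f := id) (Multiset.mem_toFinset.2 hj)

theorem mult_pos_iff {i : n.Partition} {j : ℕ} : 0 < i.mult j ↔ j ∈ i.parts :=
  Multiset.count_pos

namespace IsLabeling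

variable {i : n.Partition} {c : Fin n → ℕ × ℕ}

theorem labelCount_pos (hc : i.IsLabeling c) (x : Fin n) : 0 < i.labelCount (c x) := by
  rw [← hc]
  exact Finset.card_pos.2 ⟨x, by simp⟩

theorem snd_lt (hc : i.IsLabeling c) (x : Fin n) : (c x).2 < (c x).1 := by
  have := hc.labelCount_pos x
  unfold labelCount at this
  split_ifs at this with h
  · exact h
  · omega

theorem fst_mem_parts (hc : i.IsLabeling c) (x : Fin n) : (c x).1 ∈ i.parts := by
  have := hc.labelCount_pos x
  rw [labelCount, if_pos (hc.snd_lt x)] at this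
  exact mult_pos_iff.1 this

theorem exists_fst_eq (hc : i.IsLabeling c) {j : ℕ} (hj : j ∈ i.parts) : ∃ x, (c x).1 = j := by
  have hpos : 0 < #{x | c x = (j, 0)} := by
    rw [hc, labelCount, if_pos (i.parts_pos hj)]
    exact mult_pos_iff.2 hj
  obtain ⟨x, hx⟩ := Finset.card_pos.1 hpos
  exact ⟨x, by simp_all⟩

theorem unique {i' : n.Partition} (hc : i.IsLabeling c) (hc' : i'.IsLabeling c) : i = i' := by
  refine Nat.Partition.ext (Multiset.ext.2 fun j => ?_)
  rcases Nat.eq_zero_or_pos j with rfl | hj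
  · rw [Multiset.count_eq_zero.2 fun h => (i.parts_pos h).ne' rfl,
      Multiset.count_eq_zero.2 fun h => (i'.parts_pos h).ne' rfl]
  · have := (hc (j, 0)).symm.trans (hc' (j, 0))
    simpa [labelCount, hj, mult] using this

theorem rotLabel_comp (hc : i.IsLabeling c) (k : ℕ) : i.IsLabeling (rotLabel k ∘ c) := by
  intro q
  by_cases hq : q.2 < q.1
  · have hfiber : ∀ x, rotLabel k (c x) = q ↔ c x = rotLabel ((q.1 - 1) * k) q := fun x => by
      rw [rotLabel_eq_iff (hc.snd_lt x), and_iff_right hq]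
    simp only [Function.comp_apply, hfiber]
    rw [hc, labelCount, labelCount, if_pos (rotLabel_snd_lt _ (by omega)), if_pos hq]
    rfl
  · rw [labelCount, if_neg hq, Finset.card_eq_zero, Finset.filter_eq_empty_iff]
    rintro x - rfl
    exact hq (rotLabel_snd_lt k (by have := hc.snd_lt x; omega))

theorem rotLabel_comp_eq_iff (hc : i.IsLabeling c) {k k' : ℕ} :
    rotLabel k ∘ c = rotLabel k' ∘ c ↔ k ≡ k' [MOD i.lcmParts] := by
  rw [lcmParts, Nat.modEq_finset_lcm_iff, funext_iff]
  simp only [Function.comp_apply, rotLabel, Prod.mk.injEq, true_and, Multiset.mem_toFinset, id]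
  constructor
  · intro h j hj
    obtain ⟨x, rfl⟩ := hc.exists_fst_eq hj
    exact Nat.ModEq.add_left_cancel' _ (h x)
  · exact fun h x => Nat.ModEq.add_left _ (h _ (hc.fst_mem_parts x))

theorem rotLabel_comp_of_dvd (hc : i.IsLabeling c) {k : ℕ} (hk : i.lcmParts ∣ k) :
    rotLabel k ∘ c = c :=
  funext fun x => rotLabel_of_dvd (hc.snd_lt x)
    ((Finset.dvd_lcm (Multiset.mem_toFinset.2 (hc.fst_mem_parts x))).trans hk)

end IsLabeling

theorem labelCount_eq_zero {i : n.Partition} {p : ℕ × ℕ}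
    (hp : p ∉ Icc 1 i.dmax ×ˢ range i.dmax) : i.labelCount p = 0 := by
  unfold labelCount
  split_ifs with hlt
  · refine Nat.eq_zero_of_not_pos fun hpos => hp ?_
    have := i.parts_pos (mult_pos_iff.1 hpos)
    have := le_dmax (mult_pos_iff.1 hpos)
    simp only [mem_product, mem_Icc, mem_range]
    omega
  · rfl

theorem sum_labelCount (i : n.Partition) :
    ∑ p ∈ Icc 1 i.dmax ×ˢ range i.dmax, i.labelCount p = n := by
  have row : ∀ j ∈ Icc 1 i.dmax, ∑ r ∈ range i.dmax, i.labelCount (j, r) = i.mult j * j :=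
    fun j hj => by
      simp only [labelCount, ← Finset.sum_filter, range_filter_lt (mem_Icc.1 hj).2,
        sum_const, card_range, smul_eq_mul, mul_comm]
  rw [sum_product, sum_congr rfl row]
  conv_rhs => rw [← i.parts_sum, Finset.sum_multiset_count]
  refine (Finset.sum_subset (fun j hj => ?_) fun j _ hj => ?_).symm
  · have hj := Multiset.mem_toFinset.1 hj
    exact mem_Icc.2 ⟨i.parts_pos hj, le_dmax hj⟩
  · simp [mult, Multiset.count_eq_zero.2 (mt Multiset.mem_toFinset.2 hj)]

theorem prod_labelCount_factorial (i : n.Partition) :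
    ∏ p ∈ Icc 1 i.dmax ×ˢ range i.dmax, (i.labelCount p)! =
      ∏ j ∈ Icc 1 i.dmax, (i.mult j)! ^ j := by
  refine (prod_product ..).trans (prod_congr rfl fun j hj => ?_)
  simp only [labelCount, apply_ite Nat.factorial, Nat.factorial_zero, ← Finset.prod_filter,
    range_filter_lt (mem_Icc.1 hj).2, prod_const, card_range]

theorem exists_isLabeling (i : n.Partition) : ∃ c, i.IsLabeling c :=
  exists_card_fiber_eq _ i.labelCount (fun _ => labelCount_eq_zero)
    (by rw [sum_labelCount, Fintype.card_fin])

theorem IsLabeling.image_subset {i : n.Partition} {c : Fin n → ℕ × ℕ} (hc : i.IsLabeling c) :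
    univ.image c ⊆ Icc 1 i.dmax ×ˢ range i.dmax := by
  simp only [Finset.subset_iff, mem_image, mem_univ, true_and, forall_exists_index]
  rintro p x rfl
  by_contra hp
  exact (hc.labelCount_pos x).ne' (labelCount_eq_zero hp)

theorem natCard_labeling_mul (i : n.Partition) :
    Nat.card i.Labeling * ∏ j ∈ Icc 1 i.dmax, (i.mult j)! ^ j = n ! := by
  obtain ⟨c₀, hc₀⟩ := exists_isLabeling i
  have horbit : {c | i.IsLabeling c} = MulAction.orbit (Equiv.Perm (Fin n))ᵈᵐᵃ c₀ := by
    ext c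
    rw [DomMulAct.mem_orbit_perm_iff]
    exact forall_congr' fun p => by rw [hc₀ p]
  have hstab : Nat.card (MulAction.stabilizer (Equiv.Perm (Fin n))ᵈᵐᵃ c₀) =
      ∏ j ∈ Icc 1 i.dmax, (i.mult j)! ^ j := by
    rw [Nat.card_congr (Equiv.subtypeEquiv (q := fun g : Equiv.Perm (Fin n) => c₀ ∘ g = c₀)
        DomMulAct.mk.symm fun _ => DomMulAct.mem_stabilizer_iff), Nat.card_eq_fintype_card,
      DomMulAct.stabilizer_card', ← prod_labelCount_factorial,
      prod_subset hc₀.image_subset fun p _ hp => ?_]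
    · exact prod_congr rfl fun p _ => by rw [Fintype.card_subtype, hc₀]
    · have : IsEmpty {a // c₀ a = p} := ⟨fun a => hp (a.2 ▸ mem_image_of_mem c₀ (mem_univ a.1))⟩
      rw [Fintype.card_eq_zero, Nat.factorial_zero]
  calc Nat.card i.Labeling * _
      = Nat.card (MulAction.orbit (Equiv.Perm (Fin n))ᵈᵐᵃ c₀) *
          Nat.card (MulAction.stabilizer (Equiv.Perm (Fin n))ᵈᵐᵃ c₀) := by
        rw [hstab, ← horbit]; rfl
    _ = n ! := by
        rw [← Nat.card_prod, Nat.card_congr (MulAction.orbitProdStabilizerEquivGroup _ _),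
          Nat.card_congr DomMulAct.mk.symm, Nat.card_perm, Nat.card_fin]

instance (i : n.Partition) : Finite i.Labeling :=
  Nat.finite_of_card_ne_zero fun h => (Nat.factorial_pos n).ne' <| by
    rw [← i.natCard_labeling_mul, h, zero_mul]

end Nat.Partition

section Rotation

variable {n : ℕ}

def labelingRotSetoid (n : ℕ) : Setoid (Σ i : n.Partition, i.Labeling) where
  r a b := ∃ k, b.2.1 = rotLabel k ∘ a.2.1
  iseqv :=
    { refl := fun a => ⟨0, (a.2.2.rotLabel_comp_of_dvd (dvd_zero _)).symm⟩
      symm := fun {a b} ⟨k, hk⟩ => ⟨(a.1.lcmParts - 1) * k, by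
        rw [hk, ← Function.comp_assoc, rotLabel_comp_rotLabel,
          a.2.2.rotLabel_comp_of_dvd ⟨k, Nat.add_sub_one_mul_of_pos a.1.lcmParts_pos k⟩]⟩
      trans := fun ⟨k, hk⟩ ⟨k', hk'⟩ =>
        ⟨k + k', by rw [hk', hk, ← Function.comp_assoc, rotLabel_comp_rotLabel]⟩ }

theorem natCard_labelingRotSetoid_class (a : Σ i : n.Partition, i.Labeling) :
    Nat.card {b // labelingRotSetoid n b a} = a.1.lcmParts := by
  obtain ⟨i, c, hc⟩ := a
  have hL := i.lcmParts_pos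
  let rot (k : Fin i.lcmParts) : {b // labelingRotSetoid n b ⟨i, c, hc⟩} :=
    ⟨⟨i, rotLabel k ∘ c, hc.rotLabel_comp k⟩, (labelingRotSetoid n).iseqv.symm ⟨k, rfl⟩⟩
  refine (Nat.card_congr (Equiv.ofBijective rot ⟨fun k k' h => ?_, ?_⟩).symm).trans
    (Nat.card_fin _)
  · have h : rotLabel k ∘ c = rotLabel k' ∘ c := congrArg (fun b => b.1.2.1) h
    exact Fin.ext ((hc.rotLabel_comp_eq_iff.1 h).eq_of_lt_of_lt k.2 k'.2)
  · rintro ⟨⟨i', c', hc'⟩, hb⟩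
    obtain ⟨k, rfl⟩ := (labelingRotSetoid n).iseqv.symm hb
    obtain rfl := (hc.rotLabel_comp k).unique hc'
    refine ⟨⟨k % i.lcmParts, Nat.mod_lt _ hL⟩, Subtype.ext (Sigma.subtype_ext rfl ?_)⟩
    exact hc.rotLabel_comp_eq_iff.2 (Nat.mod_modEq _ _)

theorem natCard_quotient_labelingRotSetoid (n : ℕ) :
    (Nat.card (Quotient (labelingRotSetoid n)) : ℚ) =
      ∑ i : n.Partition, (Nat.card i.Labeling : ℚ) / i.lcmParts := by
  have : ∀ i : n.Partition, Fintype i.Labeling := fun i => Fintype.ofFinite _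
  rw [Setoid.natCard_quotient_eq_sum_inv, Fintype.sum_sigma]
  simp [natCard_labelingRotSetoid_class, Nat.card_eq_fintype_card, div_eq_mul_inv]

end Rotation

namespace PartitionedOrder

variable {n : ℕ}

section Label

variable (μ : PartitionedOrder n)

def blockOf (x : Fin n) : List (Fin n) :=
  μ.oblocks.choose (x ∈ ·) <| by
    obtain ⟨S, hS, hx⟩ := μ.cover x
    exact ⟨S, ⟨hS, hx⟩, fun T ⟨hT, hxT⟩ => by_contra fun hne => μ.disjoint T hT S hS hne x hxT hx⟩

theorem blockOf_mem (x : Fin n) : μ.blockOf x ∈ μ.oblocks :=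
  (Finset.choose_spec _ _ _).1

theorem mem_blockOf (x : Fin n) : x ∈ μ.blockOf x :=
  (Finset.choose_spec _ _ _).2

theorem blockOf_eq_iff {x : Fin n} {S : List (Fin n)} (hS : S ∈ μ.oblocks) :
    μ.blockOf x = S ↔ x ∈ S :=
  ⟨fun h => h ▸ μ.mem_blockOf x, fun hx => by_contra fun hne =>
    μ.disjoint _ (μ.blockOf_mem x) S hS hne x (μ.mem_blockOf x) hx⟩

def label (x : Fin n) : ℕ × ℕ := ((μ.blockOf x).length, (μ.blockOf x).idxOf x)

theorem label_snd_lt (x : Fin n) : (μ.label x).2 < (μ.label x).1 :=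
  List.idxOf_lt_length_iff.2 (μ.mem_blockOf x)

theorem mem_phiBlock_iff (ℓ : ℕ) (x : Fin n) :
    x ∈ μ.phiBlock ℓ ↔ ℓ % (μ.label x).1 = (μ.label x).2 := by
  simp only [phiBlock, Finset.mem_image, Finset.mem_attach, true_and, Subtype.exists, label]
  constructor
  · rintro ⟨S, hS, rfl⟩
    rw [(μ.blockOf_eq_iff hS).2 (List.get_mem _ _), List.get_idxOf (μ.nodup S hS)]
  · intro h
    refine ⟨μ.blockOf x, μ.blockOf_mem x, ?_⟩
    simp only [h]
    exact List.idxOf_get _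

theorem label_fst_dvd_period (x : Fin n) : (μ.label x).1 ∣ μ.period :=
  Finset.dvd_lcm (μ.blockOf_mem x)

theorem period_eq_lcm_label : μ.period = univ.lcm fun x => (μ.label x).1 := by
  have himage : univ.image μ.blockOf = μ.oblocks := by
    ext S
    simp only [mem_image, mem_univ, true_and]
    refine ⟨fun ⟨x, hx⟩ => hx ▸ μ.blockOf_mem x, fun hS => ?_⟩
    obtain ⟨x, hx⟩ := List.exists_mem_of_ne_nil S (μ.nonempty S hS)
    exact ⟨x, (μ.blockOf_eq_iff hS).2 hx⟩
  rw [period, ← himage, Finset.lcm_image]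
  rfl

theorem period_pos : 0 < μ.period := by
  refine Nat.pos_of_ne_zero fun h => ?_
  obtain ⟨S, hS, h0⟩ := Finset.lcm_eq_zero_iff.1 h
  exact μ.nonempty S hS (List.length_eq_zero_iff.1 h0)

theorem phiBlock_mod_period (ℓ : ℕ) : μ.phiBlock (ℓ % μ.period) = μ.phiBlock ℓ := by
  ext x
  rw [mem_phiBlock_iff, mem_phiBlock_iff, Nat.mod_mod_of_dvd _ (μ.label_fst_dvd_period x)]

theorem length_phi : μ.phi.length = μ.period := by
  simp [phi]

theorem getElem_phi {ℓ : ℕ} (h : ℓ < μ.phi.length) : μ.phi[ℓ] = μ.phiBlock ℓ := by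
  simp [phi]

theorem phi_eq_rotate_iff {μ μ' : PartitionedOrder n} {k : ℕ} :
    μ.phi = μ'.phi.rotate k ↔ μ'.label = rotLabel k ∘ μ.label := by
  have label_iff (hblock : ∀ ℓ, μ.phiBlock ℓ = μ'.phiBlock (ℓ + k)) :
      μ'.label = rotLabel k ∘ μ.label := funext fun x =>
    (eq_rotLabel_iff_forall_mod (μ.label_snd_lt x)).2 fun ℓ => by
      rw [← mem_phiBlock_iff, ← mem_phiBlock_iff, hblock]
  constructor
  · intro h
    have hp : μ.period = μ'.period := by
      simpa [length_phi] using congrArg List.length h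
    refine label_iff fun ℓ => ?_
    have hℓ : ℓ % μ.period < μ.phi.length := by
      rw [length_phi]
      exact Nat.mod_lt _ μ.period_pos
    have := List.getElem_of_eq h hℓ
    rwa [getElem_phi, phiBlock_mod_period, List.getElem_rotate, getElem_phi, length_phi, ← hp,
      Nat.mod_add_mod, hp, phiBlock_mod_period] at this
  · intro h
    have hp : μ.period = μ'.period := by
      rw [period_eq_lcm_label, period_eq_lcm_label, h]
      rfl
    have hblock (ℓ : ℕ) : μ.phiBlock ℓ = μ'.phiBlock (ℓ + k) := by
      ext x
      rw [mem_phiBlock_iff, mem_phiBlock_iff]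
      exact (eq_rotLabel_iff_forall_mod (μ.label_snd_lt x)).1 (congrFun h x) ℓ
    refine List.ext_getElem (by simp [length_phi, hp]) fun ℓ h₁ h₂ => ?_
    rw [List.getElem_rotate, getElem_phi, getElem_phi, length_phi, phiBlock_mod_period, hblock]

def profile : n.Partition where
  parts := μ.oblocks.val.map List.length
  parts_pos := by
    simp only [Multiset.mem_map]
    rintro _ ⟨S, hS, rfl⟩
    exact List.length_pos_iff.2 (μ.nonempty S hS)
  parts_sum := by
    rw [Finset.sum_map_val]
    calc ∑ S ∈ μ.oblocks, S.length = ∑ S ∈ μ.oblocks, #{x | μ.blockOf x = S} :=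
          sum_congr rfl fun S hS => by
            rw [← List.toFinset_card_of_nodup (μ.nodup S hS)]
            congr 1
            ext x
            simp [μ.blockOf_eq_iff hS]
      _ = n := by rw [← card_eq_sum_card_fiberwise fun x _ => μ.blockOf_mem x, card_univ,
            Fintype.card_fin]

theorem card_label_eq {j r : ℕ} (hr : r < j) :
    #{x | μ.label x = (j, r)} = #{S ∈ μ.oblocks | S.length = j} := by
  refine card_bij' (fun x _ => μ.blockOf x)
    (fun S hS => S[r]'((mem_filter.1 hS).2 ▸ hr)) ?_ ?_ ?_ ?_
  · intro x hx
    simp only [mem_filter, mem_univ, true_and, label, Prod.mk.injEq] at hx ⊢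
    exact ⟨μ.blockOf_mem x, hx.1⟩
  · intro S hS
    obtain ⟨hSmem, rfl⟩ := mem_filter.1 hS
    have hblock := (μ.blockOf_eq_iff hSmem).2 (List.getElem_mem hr)
    simp [label, hblock, (μ.nodup S hSmem).idxOf_getElem]
  · intro x hx
    simp only [mem_filter, mem_univ, true_and, label, Prod.mk.injEq] at hx
    simp only [← hx.2, List.getElem_idxOf]
  · intro S hS
    obtain ⟨hSmem, rfl⟩ := mem_filter.1 hS
    exact (μ.blockOf_eq_iff hSmem).2 (List.getElem_mem hr)

theorem isLabeling_label : μ.profile.IsLabeling μ.label := by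
  rintro ⟨j, r⟩
  by_cases hr : r < j
  · rw [μ.card_label_eq hr, Nat.Partition.labelCount, if_pos hr, Nat.Partition.mult, profile,
      Multiset.count_map]
    simp only [eq_comm (a := j)]
    rfl
  · rw [Nat.Partition.labelCount, if_neg hr, card_eq_zero, filter_eq_empty_iff]
    rintro x - h
    exact hr (by simpa [h] using μ.label_snd_lt x)

end Label

section OfLabeling

variable {i : n.Partition} {c : Fin n → ℕ × ℕ}

noncomputable def fiberList (c : Fin n → ℕ × ℕ) (p : ℕ × ℕ) : List (Fin n) :=
  (univ.filter (c · = p)).toList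

theorem mem_fiberList {p : ℕ × ℕ} {x : Fin n} : x ∈ fiberList c p ↔ c x = p := by
  simp [fiberList]

theorem nodup_fiberList (c : Fin n → ℕ × ℕ) (p : ℕ × ℕ) : (fiberList c p).Nodup :=
  Finset.nodup_toList _

theorem apply_getElem_fiberList {p : ℕ × ℕ} {t : ℕ} (ht : t < (fiberList c p).length) :
    c (fiberList c p)[t] = p :=
  mem_fiberList.1 (List.getElem_mem ht)

theorem length_fiberList (hc : i.IsLabeling c) {p : ℕ × ℕ} (hp : p.2 < p.1) :
    (fiberList c p).length = i.mult p.1 := by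
  rw [fiberList, Finset.length_toList, hc, Nat.Partition.labelCount, if_pos hp]

noncomputable def rank (c : Fin n → ℕ × ℕ) (x : Fin n) : ℕ := (fiberList c (c x)).idxOf x

theorem rank_lt (hc : i.IsLabeling c) (x : Fin n) : rank c x < i.mult (c x).1 := by
  rw [← length_fiberList hc (hc.snd_lt x)]
  exact List.idxOf_lt_length_iff.2 (mem_fiberList.2 rfl)

noncomputable def block (hc : i.IsLabeling c) (j t : ℕ) (ht : t < i.mult j) : List (Fin n) :=
  List.ofFn fun r : Fin j => (fiberList c (j, r))[t]'(by rwa [length_fiberList hc r.2])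

theorem mem_block (hc : i.IsLabeling c) {j t : ℕ} (ht : t < i.mult j) {y : Fin n} :
    y ∈ block hc j t ht ↔ (c y).1 = j ∧ rank c y = t := by
  rw [block, List.mem_ofFn]
  constructor
  · rintro ⟨r, rfl⟩
    have hy := apply_getElem_fiberList (p := (j, r)) (by rwa [length_fiberList hc r.2])
    refine ⟨by rw [hy], ?_⟩
    rw [rank, hy, (nodup_fiberList c _).idxOf_getElem]
  · rintro ⟨rfl, rfl⟩
    exact ⟨⟨(c y).2, hc.snd_lt y⟩, List.getElem_idxOf _⟩

theorem nodup_block (hc : i.IsLabeling c) {j t : ℕ} (ht : t < i.mult j) :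
    (block hc j t ht).Nodup := by
  refine List.nodup_ofFn.2 fun r r' h => Fin.ext ?_
  have hr := apply_getElem_fiberList (p := (j, r)) (by rwa [length_fiberList hc r.2])
  have hr' := apply_getElem_fiberList (p := (j, r')) (by rwa [length_fiberList hc r'.2])
  rw [h] at hr
  exact congrArg Prod.snd (hr.symm.trans hr')

noncomputable def blockThrough (hc : i.IsLabeling c) (x : Fin n) : List (Fin n) :=
  block hc (c x).1 (rank c x) (rank_lt hc x)

theorem mem_blockThrough_self (hc : i.IsLabeling c) (x : Fin n) : x ∈ blockThrough hc x :=
  (mem_block hc _).2 ⟨rfl, rfl⟩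

theorem blockThrough_eq_of_mem (hc : i.IsLabeling c) {x y : Fin n}
    (hy : y ∈ blockThrough hc x) : blockThrough hc y = blockThrough hc x := by
  obtain ⟨hj, ht⟩ := (mem_block hc _).1 hy
  unfold blockThrough
  congr 1

noncomputable def ofLabeling (hc : i.IsLabeling c) : PartitionedOrder n where
  oblocks := univ.image (blockThrough hc)
  nonempty := by
    simp only [mem_image, mem_univ, true_and]
    rintro _ ⟨x, rfl⟩
    exact List.ne_nil_of_mem (mem_blockThrough_self hc x)
  nodup := by
    simp only [mem_image, mem_univ, true_and]
    rintro _ ⟨x, rfl⟩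
    exact nodup_block hc _
  disjoint := by
    simp only [mem_image, mem_univ, true_and]
    rintro _ ⟨x, rfl⟩ _ ⟨x', rfl⟩ hne y hy hy'
    exact hne ((blockThrough_eq_of_mem hc hy).symm.trans (blockThrough_eq_of_mem hc hy'))
  cover x := ⟨blockThrough hc x, mem_image_of_mem _ (mem_univ x), mem_blockThrough_self hc x⟩

theorem label_ofLabeling (hc : i.IsLabeling c) : (ofLabeling hc).label = c := by
  funext x
  have hblock : (ofLabeling hc).blockOf x = blockThrough hc x :=
    ((ofLabeling hc).blockOf_eq_iff (mem_image_of_mem _ (mem_univ x))).2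
      (mem_blockThrough_self hc x)
  have hlen : (blockThrough hc x).length = (c x).1 := List.length_ofFn
  have hget : (blockThrough hc x)[(c x).2]'(hlen ▸ hc.snd_lt x) = x := by
    simp only [blockThrough, block, List.getElem_ofFn]
    exact List.getElem_idxOf _
  have hidx : (blockThrough hc x).idxOf ((blockThrough hc x)[(c x).2]'(hlen ▸ hc.snd_lt x)) =
      (c x).2 :=
    (nodup_block hc _).idxOf_getElem _ _
  rw [hget] at hidx
  rw [label, hblock, hlen, hidx]

end OfLabeling

def toLabeling (μ : PartitionedOrder n) : Σ i : n.Partition, i.Labeling :=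
  ⟨μ.profile, μ.label, μ.isLabeling_label⟩

theorem toLabeling_surjective : Function.Surjective (toLabeling (n := n)) := by
  rintro ⟨i, c, hc⟩
  refine ⟨ofLabeling hc, Sigma.subtype_ext ?_ (label_ofLabeling hc)⟩
  exact (label_ofLabeling hc ▸ (ofLabeling hc).isLabeling_label).unique hc

theorem natCard_quot_phi_rotate (n : ℕ) :
    Nat.card (Quot fun μ μ' : PartitionedOrder n => ∃ k, μ.phi = μ'.phi.rotate k) =
      Nat.card (Quotient (labelingRotSetoid n)) := by
  let f (μ : PartitionedOrder n) : Quotient (labelingRotSetoid n) := ⟦μ.toLabeling⟧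
  have hrel : (fun μ μ' : PartitionedOrder n => ∃ k, μ.phi = μ'.phi.rotate k) =
      (Setoid.ker f).r := by
    funext μ μ'
    simp only [phi_eq_rotate_iff, Setoid.ker_def, f, Quotient.eq]
    rfl
  rw [hrel]
  exact Nat.card_congr
    (Setoid.quotientKerEquivOfSurjective f (Quotient.mk_surjective.comp toLabeling_surjective))

end PartitionedOrder

open Finset in
theorem card_BPn_star_general (n : ℕ) :
    (Nat.card (Quot (fun μ μ' : PartitionedOrder n =>
        ∃ k, μ.phi = μ'.phi.rotate k)) : ℚ) =
    ∑ i : n.Partition,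
      ((n.factorial : ℚ) /
          ∏ j ∈ Icc 1 i.dmax, ((i.mult j).factorial : ℚ) ^ j) *
        (1 / (i.lcmParts : ℚ)) := by
  rw [PartitionedOrder.natCard_quot_phi_rotate, natCard_quotient_labelingRotSetoid]
  refine sum_congr rfl fun i _ => ?_
  rw [← i.natCard_labeling_mul]
  push_cast
  field_simp

open Finset in
/-- the number of block-parallel update modes of `[n]` up to
dynamical isomorphism on the limit set (`μ ≡⋆ μ'` iff `φ(μ)` is a circular
shift of `φ(μ')`) equals `∑_i [n!/∏_j (m(i,j)!)^j] · (1/lcm(i))`. -/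
theorem card_BPn_star (n : ℕ) (hn : 1 ≤ n) :
    (Nat.card (Quot (fun μ μ' : PartitionedOrder n =>
        ∃ k, μ.phi = μ'.phi.rotate k)) : ℚ) =
    ∑ i : n.Partition,
      ((n.factorial : ℚ) /
          ∏ j ∈ Icc 1 i.dmax, ((i.mult j).factorial : ℚ) ^ j) *
        (1 / (i.lcmParts : ℚ)) :=
  card_BPn_star_general n
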